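/- arXiv:1001.1392 — 5 statements merged into one kernel-verified Lean document; each statement's English description precedes it below -/
import Mathlib

section
/- In any Zinbiel algebra A over a field of characteristic 0, for every a in A and all positive integers i, j, one has a^i a^j = binomial(i+j-1, j) * a^{i+j}, where powers are defined by a^1 = a and a^{i+1} = a(a^i). -/
/-! Writing `P m` for `a^(m+1)`, the Zinbiel identity gives
`P (m+1) * P n = a (P n * P m) + a (P m * P n)`, so by induction on `m + n` both terms are multiples
of `P (m+n+2)`, and their coefficients add up by Pascal's rule. -/

/-- Right-normed powers: `apow mul a (i-1)` represents `a^i`, with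
`a^1 = a` and `a^{i+1} = a (a^i)`. -/
def apow {A : Type*} (mul : A → A → A) (a : A) : ℕ → A
  | 0 => a
  | n + 1 => mul a (apow mul a n)

theorem apow_succ {A : Type*} (mul : A → A → A) (a : A) (n : ℕ) :
    apow mul a (n + 1) = mul a (apow mul a n) :=
  rfl

theorem choose_add_succ_add_succ (m n : ℕ) :
    (m + 1 + n + 1).choose (n + 1) = (n + m + 1).choose (m + 1) + (m + n + 1).choose (n + 1) := by
  rw [Nat.choose_symm_of_eq_add (show n + m + 1 = (m + 1) + n by omega),
    show n + m + 1 = m + n + 1 by omega, ← Nat.choose_succ_succ',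
    show m + 1 + n = m + n + 1 by omega]

section Zinbiel

variable {R A : Type*} [CommSemiring R] [AddCommMonoid A] [Module R A]

def IsZinbiel (mul : A →ₗ[R] A →ₗ[R] A) : Prop :=
  ∀ x y z : A, mul (mul x y) z = mul x (mul z y) + mul x (mul y z)

theorem IsZinbiel.mul_apow_apow {mul : A →ₗ[R] A →ₗ[R] A} (hz : IsZinbiel mul) (a : A)
    (m n : ℕ) :
    mul (apow (fun x y => mul x y) a m) (apow (fun x y => mul x y) a n)
      = (m + n + 1).choose (n + 1) • apow (fun x y => mul x y) a (m + n + 1) := by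
  match m with
  | 0 => simp [apow, add_comm n 1]
  | m + 1 =>
    rw [apow_succ, hz, hz.mul_apow_apow a n m, hz.mul_apow_apow a m n, map_nsmul, map_nsmul,
      ← apow_succ (fun x y => mul x y) a, ← apow_succ (fun x y => mul x y) a,
      show n + m + 1 + 1 = m + 1 + n + 1 by omega, show m + n + 1 + 1 = m + 1 + n + 1 by omega,
      ← add_nsmul, choose_add_succ_add_succ]
termination_by m + n

end Zinbiel

theorem stmt1_general (k A : Type*) [Field k] [AddCommGroup A] [Module k A]
    (mul : A →ₗ[k] A →ₗ[k] A)
    (hz : ∀ x y z : A, mul (mul x y) z = mul x (mul z y) + mul x (mul y z))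
    (a : A) (i j : ℕ) (hi : 1 ≤ i) (hj : 1 ≤ j) :
    mul (apow (fun x y => mul x y) a (i - 1)) (apow (fun x y => mul x y) a (j - 1))
      = (((i + j - 1).choose j : k)) • apow (fun x y => mul x y) a (i + j - 1) := by
  obtain ⟨m, rfl⟩ := Nat.exists_eq_add_of_le' hi
  obtain ⟨n, rfl⟩ := Nat.exists_eq_add_of_le' hj
  rw [Nat.add_sub_cancel, Nat.add_sub_cancel, show m + 1 + (n + 1) - 1 = m + n + 1 by omega,
    Nat.cast_smul_eq_nsmul]
  exact IsZinbiel.mul_apow_apow hz a m n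

/-- In any Zinbiel algebra over a field of characteristic 0,
`a^i a^j = binomial (i+j-1) j • a^(i+j)` for positive integers `i, j`. -/
theorem stmt1 (k A : Type*) [Field k] [CharZero k] [AddCommGroup A] [Module k A]
    (mul : A →ₗ[k] A →ₗ[k] A)
    (hz : ∀ x y z : A, mul (mul x y) z = mul x (mul z y) + mul x (mul y z))
    (a : A) (i j : ℕ) (hi : 1 ≤ i) (hj : 1 ≤ j) :
    mul (apow (fun x y => mul x y) a (i - 1)) (apow (fun x y => mul x y) a (j - 1))
      = (((i + j - 1).choose j : k)) • apow (fun x y => mul x y) a (i + j - 1) :=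
  stmt1_general k A mul hz a i j hi hj
end

section
/- In the free Zinbiel algebra A on one generator x over a field of characteristic 0 (with basis x, x^2, x^3, ..., powers defined by x^{i+1} = x x^i, and multiplication x^i x^j = binomial(i+j-1, j) x^{i+j}), for any positive integers λ_1,...,λ_n, the left-normed-from-the-right product X_{λ_1}(X_{λ_2}(⋯(X_{λ_{n-1}} X_{λ_n})⋯)) equals P_n(λ_1,...,λ_n) X_{λ_1+...+λ_n}, where X_i = i! x^i and P_n(λ_1,...,λ_n) = ∏_{m=1}^{n-1} λ_m/(λ_m + ... + λ_n). -/
/-- `rnorm mul g i m` is the right-normed product `g i (g (i+1) (⋯ (g (i+m)) ⋯))`. -/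
def rnorm {A : Type*} (mul : A → A → A) (g : ℕ → A) (i : ℕ) : ℕ → A
  | 0 => g i
  | m + 1 => mul (g i) (rnorm mul g (i + 1) m)

/-- `Pfun l n = ∏_{m=1}^{n-1} l m / (l m + ... + l n)`. -/
def Pfun (l : ℕ → ℚ) (n : ℕ) : ℚ :=
  ∏ m ∈ Finset.Ico 1 n, l m / (∑ t ∈ Finset.Icc m n, l t)

/-
In terms of `X_i = i! x^i` the power formula `x^a x^b = C(a+b-1, b) x^{a+b}` reads
`X_a X_b = a/(a+b) X_{a+b}`. Evaluating the right-normed product from the inside, the tail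
`X_{λ_{m+1}}(⋯ X_{λ_n})` is a multiple of `X_{λ_{m+1}+⋯+λ_n}`, so multiplying by `X_{λ_m}`
contributes the factor `λ_m / (λ_m + ⋯ + λ_n)`.
-/

open Finset Nat

theorem Nat.factorial_mul_factorial_mul_choose_pred_mul_add {a b : ℕ} (ha : 0 < a) :
    a ! * b ! * (a + b - 1).choose b * (a + b) = a * (a + b)! := by
  obtain ⟨a, rfl⟩ := Nat.exists_eq_add_one_of_ne_zero ha.ne'
  have hchoose := Nat.choose_mul_succ_eq (a + b) b
  rw [show a + b + 1 - b = a + 1 by omega] at hchoose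
  rw [show a + 1 + b - 1 = a + b by omega, ← Nat.add_choose_mul_factorial_mul_factorial (a + 1) b,
    show a + 1 + b = a + b + 1 by ring]
  calc _ = (a + 1)! * b ! * ((a + b).choose b * (a + b + 1)) := by ring
    _ = _ := by rw [hchoose]; ring

theorem Nat.cast_factorial_mul_factorial_mul_choose_pred {k : Type*} [Field k] [CharZero k]
    {a b : ℕ} (ha : 0 < a) :
    (a ! * b ! * (a + b - 1).choose b : k) = a / (a + b) * ((a + b)! : ℕ) := by
  have hab : (a + b : k) ≠ 0 := by exact_mod_cast (by omega : a + b ≠ 0)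
  field_simp
  exact_mod_cast Nat.factorial_mul_factorial_mul_choose_pred_mul_add ha

section BilinearProduct

variable {k A : Type*} [Field k] [AddCommGroup A] [Module k A] (mul : A →ₗ[k] A →ₗ[k] A)

theorem rnorm_eq_prod_smul (X : ℕ → A)
    (hX : ∀ a b, 0 < a → 0 < b → mul (X a) (X b) = ((a : k) / (a + b)) • X (a + b))
    (l : ℕ → ℕ) (hl : ∀ i, 0 < l i) (i m : ℕ) :
    rnorm (fun a b => mul a b) (fun j => X (l j)) i m =
      (∏ j ∈ Ico i (i + m), (l j : k) / ∑ t ∈ Icc j (i + m), (l t : k)) •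
        X (∑ t ∈ Icc i (i + m), l t) := by
  induction m generalizing i with
  | zero => simp [rnorm]
  | succ m ih =>
    have hupper : i + 1 + m = i + (m + 1) := by omega
    have hsum : ∑ t ∈ Icc i (i + (m + 1)), l t = l i + ∑ t ∈ Icc (i + 1) (i + (m + 1)), l t := by
      rw [Icc_add_one_left_eq_Ioc, add_sum_Ioc_eq_sum_Icc (by omega)]
    have hsum_cast : ∑ t ∈ Icc i (i + (m + 1)), (l t : k) =
        l i + ∑ t ∈ Icc (i + 1) (i + (m + 1)), (l t : k) := by
      simpa only [Nat.cast_add, Nat.cast_sum] using congrArg (Nat.cast (R := k)) hsum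
    have hprod (f : ℕ → k) :
        ∏ j ∈ Ico i (i + (m + 1)), f j = f i * ∏ j ∈ Ico (i + 1) (i + (m + 1)), f j := by
      rw [Ico_add_one_left_eq_Ioo, mul_prod_Ioo_eq_prod_Ico (by omega)]
    have htail_pos : 0 < ∑ t ∈ Icc (i + 1) (i + (m + 1)), l t :=
      sum_pos (fun t _ => hl t) (nonempty_Icc.2 (by omega))
    change mul (X (l i)) (rnorm (fun a b => mul a b) (fun j => X (l j)) (i + 1) m) = _
    rw [ih, hupper, map_smul, hX _ _ (hl i) htail_pos, smul_smul, hsum, hprod, hsum_cast,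
      Nat.cast_sum, mul_comm]

theorem mul_factorial_smul_apow [CharZero k] (x : A)
    (hfree : ∀ i j : ℕ, 1 ≤ i → 1 ≤ j →
      mul (apow (fun a b => mul a b) x (i - 1)) (apow (fun a b => mul a b) x (j - 1))
        = (((i + j - 1).choose j : k)) • apow (fun a b => mul a b) x (i + j - 1))
    {a b : ℕ} (ha : 0 < a) (hb : 0 < b) :
    mul ((a ! : k) • apow (fun a b => mul a b) x (a - 1))
        ((b ! : k) • apow (fun a b => mul a b) x (b - 1)) =
      ((a : k) / (a + b)) • (((a + b)! : k) • apow (fun a b => mul a b) x (a + b - 1)) := by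
  rw [map_smul, LinearMap.map_smul₂, hfree a b ha hb, smul_smul, smul_smul, smul_smul,
    ← Nat.cast_factorial_mul_factorial_mul_choose_pred ha]
  congr 1
  ring

end BilinearProduct

theorem stmt5_general (k A : Type*) [Field k] [CharZero k] [AddCommGroup A] [Module k A]
    (mul : A →ₗ[k] A →ₗ[k] A)
    (x : A)
    (hfree : ∀ i j : ℕ, 1 ≤ i → 1 ≤ j →
      mul (apow (fun a b => mul a b) x (i - 1)) (apow (fun a b => mul a b) x (j - 1))
        = (((i + j - 1).choose j : k)) • apow (fun a b => mul a b) x (i + j - 1))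
    (n : ℕ) (hn : 1 ≤ n) (l : ℕ → ℕ) (hl : ∀ i, 0 < l i) :
    rnorm (fun a b => mul a b)
        (fun i => ((l i).factorial : k) • apow (fun a b => mul a b) x (l i - 1)) 1 (n - 1)
      = ((Pfun (fun i => (l i : ℚ)) n : ℚ) : k) •
          (((∑ t ∈ Finset.Icc 1 n, l t).factorial : k) •
            apow (fun a b => mul a b) x ((∑ t ∈ Finset.Icc 1 n, l t) - 1)) := by
  have hrnorm := rnorm_eq_prod_smul mul (fun a => (a ! : k) • apow (fun a b => mul a b) x (a - 1))
    (fun _ _ => mul_factorial_smul_apow mul x hfree) l hl 1 (n - 1)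
  rw [show 1 + (n - 1) = n by omega] at hrnorm
  rw [hrnorm, Pfun, Rat.cast_prod]
  simp only [Rat.cast_div, Rat.cast_sum, Rat.cast_natCast]

/-- In the free Zinbiel algebra on one generator `x` over a field of characteristic 0
(equivalently, in any Zinbiel algebra, by the power formula `x^i x^j = C(i+j-1,j) x^{i+j}`),
for positive integers `λ_1, ..., λ_n` one has
`X_{λ_1}(X_{λ_2}(⋯(X_{λ_{n-1}} X_{λ_n})⋯)) = P_n(λ_1,...,λ_n) • X_{λ_1+...+λ_n}`,
where `X_i = i! • x^i`. -/
theorem stmt5 (k A : Type*) [Field k] [CharZero k] [AddCommGroup A] [Module k A]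
    (mul : A →ₗ[k] A →ₗ[k] A)
    (hz : ∀ x y z : A, mul (mul x y) z = mul x (mul z y) + mul x (mul y z))
    (x : A)
    (hfree : ∀ i j : ℕ, 1 ≤ i → 1 ≤ j →
      mul (apow (fun a b => mul a b) x (i - 1)) (apow (fun a b => mul a b) x (j - 1))
        = (((i + j - 1).choose j : k)) • apow (fun a b => mul a b) x (i + j - 1))
    (n : ℕ) (hn : 1 ≤ n) (l : ℕ → ℕ) (hl : ∀ i, 0 < l i) :
    rnorm (fun a b => mul a b)
        (fun i => ((l i).factorial : k) • apow (fun a b => mul a b) x (l i - 1)) 1 (n - 1)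
      = ((Pfun (fun i => (l i : ℚ)) n : ℚ) : k) •
          (((∑ t ∈ Finset.Icc 1 n, l t).factorial : k) •
            apow (fun a b => mul a b) x ((∑ t ∈ Finset.Icc 1 n, l t) - 1)) :=
  stmt5_general k A mul x hfree n hn l hl
end

section
/- Let n ≥ 2 and let (α_σ)_{σ ∈ S_n} be scalars in a field k of characteristic 0. If ∑_{σ ∈ S_n} α_σ Q_n(λ_{σ(1)},...,λ_{σ(n)}) = 0 for all positive integers λ_1,...,λ_n, then ∑_{δ ∈ S_{n-1}} α_δ Q_{n-1}(λ_{δ(1)},...,λ_{δ(n-1)}) = 0 for all positive integers λ_1,...,λ_{n-1}, where each δ ∈ S_{n-1} is identified with the σ ∈ S_n fixing n, and Q_m(μ_1,...,μ_m) = 1/∏_{j=2}^{m}(μ_j + ... + μ_m). -/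
/-!
Put `λ_i = N μ_i` for `i ≠ n` and `λ_n = 1`. By homogeneity of `Q_n`, the hypothesis at `λ` says
that `∑ σ, α σ * y * Q_n(λ_y ∘ σ)` vanishes at `y = 1/N`, where `λ_y` is `μ` with last entry `y`.
For each `σ` the summand is a rational function of `y` that is regular at `0`: if `σ` fixes `n`,
the last tail sum of `λ_y ∘ σ` is `y` and cancels the factor `y`, leaving `Q_{n-1}(μ ∘ σ)` at
`y = 0`; otherwise every tail sum contains `μ_{σ(n)} > 0` and the value at `0` is `0`.
A sum of rational functions vanishing at infinitely many points vanishes wherever all of them are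
regular, in particular at `y = 0`.
-/

/-- `Qfin μ = 1 / ∏_{j=2}^{n} (μ_j + μ_{j+1} + ... + μ_n)` (0-indexed: `j ≠ 0`). -/
def Qfin {k : Type*} [Field k] {n : ℕ} (μ : Fin n → k) : k :=
  (∏ j ∈ Finset.univ.filter (fun j : Fin n => (j : ℕ) ≠ 0),
    ∑ t ∈ Finset.univ.filter (fun t : Fin n => j ≤ t), μ t)⁻¹

open Finset Polynomial

theorem Fin.card_filter_val_ne_zero {n : ℕ} :
    #(univ.filter (fun j : Fin n => (j : ℕ) ≠ 0)) = n - 1 := by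
  cases n with
  | zero => rfl
  | succ n => simp [filter_ne']

section TailSums

variable {R : Type*} [CommSemiring R] {n : ℕ}

def tailSum (ν : Fin n → R) (j : Fin n) : R :=
  ∑ t ∈ univ.filter (fun t : Fin n => j ≤ t), ν t

def tailSumProd (ν : Fin n → R) : R :=
  ∏ j ∈ univ.filter (fun j : Fin n => (j : ℕ) ≠ 0), tailSum ν j

theorem Qfin_eq_inv_tailSumProd {k : Type*} [Field k] (ν : Fin n → k) :
    Qfin ν = (tailSumProd ν)⁻¹ := rfl

theorem map_tailSum {S : Type*} [CommSemiring S] (f : R →+* S) (ν : Fin n → R) (j : Fin n) :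
    f (tailSum ν j) = tailSum (fun i => f (ν i)) j :=
  map_sum f _ _

theorem tailSumProd_const_mul (c : R) (ν : Fin n → R) :
    tailSumProd (fun i => c * ν i) = c ^ (n - 1) * tailSumProd ν := by
  simp only [tailSumProd, tailSum, ← mul_sum, prod_mul_distrib, prod_const,
    Fin.card_filter_val_ne_zero]

theorem tailSum_last (ν : Fin (n + 1) → R) : tailSum ν (Fin.last n) = ν (Fin.last n) := by
  simp [tailSum, sum_filter]

theorem tailSum_castSucc (ν : Fin (n + 1) → R) (j : Fin n) :
    tailSum ν j.castSucc = tailSum (fun i => ν i.castSucc) j + ν (Fin.last n) := by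
  simp [tailSum, sum_filter, Fin.sum_univ_castSucc, Fin.le_last]

theorem tailSumProd_eq_prod_mul_last (ν : Fin (n + 1) → R) (hn : n ≠ 0) :
    tailSumProd ν =
      (∏ j ∈ univ.filter (fun j : Fin n => (j : ℕ) ≠ 0), tailSum ν j.castSucc) *
        ν (Fin.last n) := by
  rw [tailSumProd, prod_filter, Fin.prod_univ_castSucc, Fin.val_last, if_pos hn, tailSum_last,
    prod_filter]
  rfl

theorem tailSum_pos {ν : Fin n → ℕ} {j t : Fin n} (hjt : j ≤ t) (ht : 0 < ν t) :
    0 < tailSum ν j :=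
  ht.trans_le (single_le_sum (fun _ _ => Nat.zero_le _) (mem_filter.2 ⟨mem_univ _, hjt⟩))

end TailSums

theorem Polynomial.sum_eval_div_eval_eq_zero {k ι : Type*} [Field k] {s : Finset ι}
    {p q : ι → k[X]} {S : Set k} (hS : S.Infinite)
    (h : ∀ y ∈ S, ∑ i ∈ s, (p i).eval y / (q i).eval y = 0)
    {x : k} (hx : ∀ i ∈ s, (q i).eval x ≠ 0) :
    ∑ i ∈ s, (p i).eval x / (q i).eval x = 0 := by
  classical
  set Q := ∏ i ∈ s, q i
  have hQ_eval (y : k) : Q.eval y = ∏ i ∈ s, (q i).eval y := eval_prod _ _ _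
  have hQx : Q.eval x ≠ 0 := by rw [hQ_eval]; exact prod_ne_zero_iff.2 hx
  have hQ : Q ≠ 0 := fun hQ => hQx (by rw [hQ, eval_zero])
  have hcleared (y : k) (hy : Q.eval y ≠ 0) :
      (∑ i ∈ s, p i * ∏ j ∈ s.erase i, q j).eval y =
        (∑ i ∈ s, (p i).eval y / (q i).eval y) * Q.eval y := by
    rw [hQ_eval] at hy ⊢
    simp only [eval_finsetSum, eval_mul, eval_prod, sum_mul]
    refine sum_congr rfl fun i hi => ?_
    rw [← mul_prod_erase s _ hi]
    have hqi : (q i).eval y ≠ 0 := prod_ne_zero_iff.1 hy i hi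
    field_simp
  have hF : ∑ i ∈ s, p i * ∏ j ∈ s.erase i, q j = 0 := by
    refine eq_zero_of_infinite_isRoot _ ((hS.sdiff (finite_setOfPred_isRoot hQ)).mono ?_)
    rintro y ⟨hyS, hyQ⟩
    simp only [Set.mem_ofPred_eq, IsRoot.def] at hyQ ⊢
    rw [hcleared y hyQ, h y hyS, zero_mul]
  have hx0 := hcleared x hQx
  rw [hF, eval_zero, eq_comm] at hx0
  exact (mul_eq_zero.1 hx0).resolve_right hQx

section LastEntryToZero

open Equiv

variable {k : Type*} [Field k] {m : ℕ}

variable (k) in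
noncomputable def lastToX (μ : Fin (m + 1) → ℕ) : Fin (m + 1) → k[X] :=
  fun i => if i = Fin.last m then X else C (μ i : k)

/- Numerator and denominator of `y * Qfin (fun i => (lastToX k μ (σ i)).eval y)` as a rational
function of `y`, with the factor `y` cancelled so that the denominator is nonzero at `y = 0`. -/
variable (k) in
noncomputable def scaledQfinNum (μ : Fin (m + 1) → ℕ) (σ : Perm (Fin (m + 1))) : k[X] :=
  if σ (Fin.last m) = Fin.last m then 1 else C ((μ (σ (Fin.last m)) : k)⁻¹) * X

variable (k) in
noncomputable def scaledQfinDen (μ : Fin (m + 1) → ℕ) (σ : Perm (Fin (m + 1))) : k[X] :=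
  ∏ j ∈ univ.filter (fun j : Fin m => (j : ℕ) ≠ 0),
    tailSum (fun i => lastToX k μ (σ i)) j.castSucc

theorem eval_scaledQfinDen (μ : Fin (m + 1) → ℕ) (σ : Perm (Fin (m + 1))) (y : k) :
    (scaledQfinDen k μ σ).eval y = ∏ j ∈ univ.filter (fun j : Fin m => (j : ℕ) ≠ 0),
      tailSum (fun i => (lastToX k μ (σ i)).eval y) j.castSucc := by
  simp only [scaledQfinDen, eval_prod, ← coe_evalRingHom, map_tailSum]

theorem eval_lastToX_zero (μ : Fin (m + 1) → ℕ) (i : Fin (m + 1)) :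
    (lastToX k μ i).eval 0 = ((if i = Fin.last m then 0 else μ i : ℕ) : k) := by
  unfold lastToX; split_ifs <;> simp

theorem mul_Qfin_eval_lastToX (hm : m ≠ 0) (μ : Fin (m + 1) → ℕ) (σ : Perm (Fin (m + 1)))
    {y : k} (hy : y ≠ 0) :
    y * Qfin (fun i => (lastToX k μ (σ i)).eval y) =
      (scaledQfinNum k μ σ).eval y / (scaledQfinDen k μ σ).eval y := by
  rw [Qfin_eq_inv_tailSumProd, tailSumProd_eq_prod_mul_last _ hm, eval_scaledQfinDen]
  generalize (∏ j ∈ _, _ : k) = P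
  unfold scaledQfinNum lastToX
  split_ifs
  · simp [hy]
  · simp only [eval_mul, eval_C, eval_X]
    ring

theorem eval_scaledQfinDen_zero_ne_zero [CharZero k] {μ : Fin (m + 1) → ℕ}
    (hμ : ∀ i, 0 < μ i) (σ : Perm (Fin (m + 1))) : (scaledQfinDen k μ σ).eval 0 ≠ 0 := by
  set ν : Fin (m + 1) → ℕ := fun i => if σ i = Fin.last m then 0 else μ (σ i)
  have hν : ∀ t, σ t ≠ Fin.last m → 0 < ν t := fun t ht => by simp [ν, ht, hμ]
  rw [eval_scaledQfinDen, prod_ne_zero_iff]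
  intro j _
  simp only [eval_lastToX_zero, ← eq_natCast (Nat.castRingHom k), ← map_tailSum]
  rw [Nat.coe_castRingHom, Nat.cast_ne_zero, ← Nat.pos_iff_ne_zero]
  by_cases hj : σ j.castSucc = Fin.last m
  · refine tailSum_pos (Fin.le_last _) (hν _ fun h => ?_)
    exact (Fin.castSucc_lt_last j).ne (σ.injective (hj.trans h.symm))
  · exact tailSum_pos le_rfl (hν _ hj)

theorem eval_scaledQfinNum_div_den_zero (μ : Fin (m + 1) → ℕ) (σ : Perm (Fin (m + 1))) :
    (scaledQfinNum k μ σ).eval 0 / (scaledQfinDen k μ σ).eval 0 =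
      if σ (Fin.last m) = Fin.last m then Qfin (fun i : Fin m => (μ (σ i.castSucc) : k))
      else 0 := by
  unfold scaledQfinNum
  split_ifs with hσ
  · have hσ' (i : Fin m) : σ i.castSucc ≠ Fin.last m := fun h =>
      (Fin.castSucc_lt_last i).ne (σ.injective (h.trans hσ.symm))
    simp [eval_scaledQfinDen, tailSum_castSucc, eval_lastToX_zero, hσ, hσ',
      Qfin_eq_inv_tailSumProd, tailSumProd]
  · simp

theorem sum_Qfin_eval_lastToX_eq_zero [CharZero k] (α : Perm (Fin (m + 1)) → k)
    (h : ∀ μ : Fin (m + 1) → ℕ, (∀ i, 0 < μ i) →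
      ∑ σ : Perm (Fin (m + 1)), α σ * Qfin (fun i => (μ (σ i) : k)) = 0)
    {μ : Fin (m + 1) → ℕ} (hμ : ∀ i, 0 < μ i) {N : ℕ} (hN : N ≠ 0) :
    ∑ σ, α σ * Qfin (fun i => (lastToX k μ (σ i)).eval (N : k)⁻¹) = 0 := by
  set ν : Fin (m + 1) → ℕ := fun i => if i = Fin.last m then 1 else N * μ i
  have hν : ∀ i, 0 < ν i := fun i => by
    simp only [ν]; split_ifs
    · exact one_pos
    · exact Nat.mul_pos (Nat.pos_of_ne_zero hN) (hμ i)
  have hscale (σ : Perm (Fin (m + 1))) : Qfin (fun i => (ν (σ i) : k)) =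
      ((N : k) ^ m)⁻¹ * Qfin (fun i => (lastToX k μ (σ i)).eval (N : k)⁻¹) := by
    have : (fun i => (ν (σ i) : k)) =
        fun i => (N : k) * (lastToX k μ (σ i)).eval (N : k)⁻¹ := by
      funext i; simp only [ν, lastToX]; split_ifs <;> simp [hN]
    rw [this, Qfin_eq_inv_tailSumProd, tailSumProd_const_mul, mul_inv, Nat.add_sub_cancel,
      Qfin_eq_inv_tailSumProd]
  have hsum := h ν hν
  simp_rw [hscale, mul_left_comm (α _), ← mul_sum] at hsum
  exact (mul_eq_zero.1 hsum).resolve_left (by simp [hN])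

end LastEntryToZero

/-- If `∑_{σ ∈ S_n} α_σ Q_n(λ_{σ(1)},...,λ_{σ(n)}) = 0` for all positive integers
`λ_1,...,λ_n`, then `∑_{δ ∈ S_{n-1}} α_δ Q_{n-1}(λ_{δ(1)},...,λ_{δ(n-1)}) = 0`
for all positive integers `λ_1,...,λ_{n-1}`, where `δ ∈ S_{n-1}` is identified with
the permutation in `S_n` fixing `n`. Here `n = m + 1`, `m ≥ 1`. -/
theorem stmt6 (k : Type*) [Field k] [CharZero k] (m : ℕ) (hm : 1 ≤ m)
    (α : Equiv.Perm (Fin (m + 1)) → k)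
    (h : ∀ μ : Fin (m + 1) → ℕ, (∀ i, 0 < μ i) →
      ∑ σ : Equiv.Perm (Fin (m + 1)), α σ * Qfin (fun i => (μ (σ i) : k)) = 0) :
    ∀ μ : Fin (m + 1) → ℕ, (∀ i, 0 < μ i) →
      ∑ σ ∈ Finset.univ.filter
          (fun σ : Equiv.Perm (Fin (m + 1)) => σ (Fin.last m) = Fin.last m),
        α σ * Qfin (fun i : Fin m => (μ (σ i.castSucc) : k)) = 0 := by
  intro μ hμ
  set S : Set k := Set.range fun N : ℕ => ((N + 1 : ℕ) : k)⁻¹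
  have hS : S.Infinite := Set.infinite_range_of_injective fun a b hab => by simpa using hab
  have hvanish : ∀ y ∈ S, ∑ σ, (C (α σ) * scaledQfinNum k μ σ).eval y /
      (scaledQfinDen k μ σ).eval y = 0 := by
    rintro _ ⟨N, rfl⟩
    have hy : ((N + 1 : ℕ) : k)⁻¹ ≠ 0 := inv_ne_zero (Nat.cast_ne_zero.2 N.succ_ne_zero)
    simp_rw [eval_mul, eval_C, mul_div_assoc, ← mul_Qfin_eval_lastToX (by omega) μ _ hy,
      mul_left_comm (α _), ← mul_sum, sum_Qfin_eval_lastToX_eq_zero α h hμ N.succ_ne_zero,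
      mul_zero]
  have hzero := sum_eval_div_eval_eq_zero hS hvanish fun σ _ =>
    eval_scaledQfinDen_zero_ne_zero hμ σ
  simpa only [eval_mul, eval_C, mul_div_assoc, eval_scaledQfinNum_div_den_zero, mul_ite,
    mul_zero, ← sum_filter] using hzero
end

section
/- For n ≥ 1 and scalars (α_σ)_{σ ∈ S_n} in ℚ, if ∑_{σ ∈ S_n} α_σ P_n(λ_{σ(1)},...,λ_{σ(n)}) = 0 for all positive integers λ_1,...,λ_n, then all α_σ = 0, where P_n(λ_1,...,λ_n) = ∏_{m=1}^{n-1} λ_m/(λ_m + ... + λ_n). -/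
/-- `Pfin μ = ∏_{m=1}^{n-1} μ_m / (μ_m + μ_{m+1} + ... + μ_n)` (0-indexed). -/
def Pfin {n : ℕ} (μ : Fin n → ℚ) : ℚ :=
  ∏ j ∈ Finset.univ.filter (fun j : Fin n => (j : ℕ) + 1 < n),
    μ j / ∑ t ∈ Finset.univ.filter (fun t : Fin n => j ≤ t), μ t

/-!
Take the weights `μ i = b ^ (n - 1 - π i)`, which decrease geometrically along `π⁻¹`.
As `b → ∞` every factor of `P_n` at these weights tends to `1` when `π = 1`, while for `π ≠ 1`
the factor at the least point moved by `π` is at most `1 / b`. So after reindexing by `τ`, the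
vanishing sum tends to `α τ`, which is therefore `0`.
-/

open Finset Filter Topology

theorem Equiv.Perm.exists_lt_apply_and_le_symm_apply {α : Type*} [LinearOrder α] [Fintype α]
    {π : Equiv.Perm α} (hπ : π ≠ 1) : ∃ j, j < π j ∧ j ≤ π.symm j := by
  have hne : π.support.Nonempty :=
    nonempty_iff_ne_empty.2 fun h => hπ (Equiv.Perm.support_eq_empty_iff.1 h)
  set j := π.support.min' hne
  have hfix : ∀ i < j, π i = i := fun i hi => by
    by_contra hmoved
    exact (π.support.min'_le i (Equiv.Perm.mem_support.2 hmoved)).not_gt hi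
  have hj : π j ≠ j := Equiv.Perm.mem_support.1 (π.support.min'_mem hne)
  refine ⟨j, lt_of_not_ge fun hle => hj ?_, le_of_not_gt fun hlt => hj ?_⟩
  · exact π.injective (hfix _ (lt_of_le_of_ne hle hj))
  · simpa using congrArg π (hfix _ hlt)

namespace Pfin

variable {n : ℕ}

def tailSum (μ : Fin n → ℚ) (j : Fin n) : ℚ :=
  ∑ t ∈ univ.filter (fun t : Fin n => j ≤ t), μ t

theorem eq_prod_div_tailSum (μ : Fin n → ℚ) :
    Pfin μ = ∏ j ∈ univ.filter (fun j : Fin n => (j : ℕ) + 1 < n), μ j / tailSum μ j :=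
  rfl

theorem single_le_tailSum {μ : Fin n → ℚ} (hμ : ∀ i, 0 ≤ μ i) {j t : Fin n} (hjt : j ≤ t) :
    μ t ≤ tailSum μ j :=
  single_le_sum (fun t _ => hμ t) (mem_filter.2 ⟨mem_univ t, hjt⟩)

theorem div_tailSum_nonneg {μ : Fin n → ℚ} (hμ : ∀ i, 0 ≤ μ i) (j : Fin n) :
    0 ≤ μ j / tailSum μ j :=
  div_nonneg (hμ j) (sum_nonneg fun t _ => hμ t)

theorem div_tailSum_le_one {μ : Fin n → ℚ} (hμ : ∀ i, 0 ≤ μ i) (j : Fin n) :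
    μ j / tailSum μ j ≤ 1 :=
  div_le_one_of_le₀ (single_le_tailSum hμ le_rfl) (sum_nonneg fun t _ => hμ t)

theorem div_tailSum_eq_inv (μ : Fin n → ℚ) (j : Fin n) :
    μ j / tailSum μ j = (∑ t ∈ univ.filter (fun t : Fin n => j ≤ t), μ t / μ j)⁻¹ := by
  rw [← sum_div, inv_div]
  rfl

theorem nonneg {μ : Fin n → ℚ} (hμ : ∀ i, 0 ≤ μ i) : 0 ≤ Pfin μ :=
  prod_nonneg fun j _ => div_tailSum_nonneg hμ j

theorem le_div_tailSum {μ : Fin n → ℚ} (hμ : ∀ i, 0 ≤ μ i) {j : Fin n}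
    (hj : (j : ℕ) + 1 < n) : Pfin μ ≤ μ j / tailSum μ j := by
  rw [eq_prod_div_tailSum, ← mul_prod_erase _ _ (mem_filter.2 ⟨mem_univ j, hj⟩)]
  exact mul_le_of_le_one_right (div_tailSum_nonneg hμ j)
    (prod_le_one (fun i _ => div_tailSum_nonneg hμ i) fun i _ => div_tailSum_le_one hμ i)

def geomWeights (π : Equiv.Perm (Fin n)) (b : ℚ) : Fin n → ℚ :=
  fun i => b ^ (n - 1 - (π i : ℕ))

theorem geomWeights_pos (π : Equiv.Perm (Fin n)) {b : ℚ} (hb : 0 < b) (i : Fin n) :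
    0 < geomWeights π b i :=
  pow_pos hb _

theorem geomWeights_le_inv {π : Equiv.Perm (Fin n)} (hπ : π ≠ 1) {b : ℚ} (hb : 1 ≤ b) :
    Pfin (geomWeights π b) ≤ b⁻¹ := by
  obtain ⟨j, hj, hj_symm⟩ := π.exists_lt_apply_and_le_symm_apply hπ
  have hj' : (j : ℕ) < π j := hj
  have hjn : (j : ℕ) + 1 < n := by have := (π j).isLt; omega
  have hb0 : 0 < b := one_pos.trans_le hb
  have hμ i := (geomWeights_pos π hb0 i).le
  have hexp : n - 1 - (π j : ℕ) + 1 ≤ n - 1 - j := by omega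
  calc Pfin (geomWeights π b)
      ≤ geomWeights π b j / tailSum (geomWeights π b) j := le_div_tailSum hμ hjn
    _ ≤ geomWeights π b j / geomWeights π b (π.symm j) :=
        div_le_div_of_nonneg_left (hμ j) (geomWeights_pos π hb0 _) (single_le_tailSum hμ hj_symm)
    _ ≤ b ^ (n - 1 - (π j : ℕ)) / (b ^ (n - 1 - (π j : ℕ)) * b) := by
        simp only [geomWeights, Equiv.apply_symm_apply]
        rw [← pow_succ]
        exact div_le_div_of_nonneg_left (pow_pos hb0 _).le (pow_pos hb0 _)
          (pow_le_pow_right₀ hb hexp)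
    _ = b⁻¹ := div_mul_cancel_left₀ (pow_pos hb0 _).ne' b

theorem tendsto_geomWeights_of_ne_one {π : Equiv.Perm (Fin n)} (hπ : π ≠ 1) :
    Tendsto (fun b => Pfin (geomWeights π b)) atTop (𝓝 0) := by
  refine tendsto_of_tendsto_of_tendsto_of_le_of_le' tendsto_const_nhds tendsto_inv_atTop_zero ?_ ?_
  · filter_upwards [eventually_gt_atTop 0] with b hb
    exact nonneg fun i => (geomWeights_pos π hb i).le
  · filter_upwards [eventually_ge_atTop 1] with b hb
    exact geomWeights_le_inv hπ hb

theorem tendsto_geomWeights_one :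
    Tendsto (fun b => Pfin (geomWeights (1 : Equiv.Perm (Fin n)) b)) atTop (𝓝 1) := by
  have hsum (j : Fin n) : Tendsto (fun b : ℚ => ∑ t ∈ univ.filter (fun t : Fin n => j ≤ t),
      b⁻¹ ^ ((t : ℕ) - j)) atTop (𝓝 1) := by
    have := tendsto_finsetSum (univ.filter (fun t : Fin n => j ≤ t))
      fun t _ => (tendsto_inv_atTop_zero (𝕜 := ℚ)).pow ((t : ℕ) - j)
    have hvanish (t : Fin n) (ht : t ∈ univ.filter (fun t : Fin n => j ≤ t)) (htj : t ≠ j) :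
        (0 : ℚ) ^ ((t : ℕ) - j) = 0 := by
      have hjt : j < t := lt_of_le_of_ne (mem_filter.1 ht).2 htj.symm
      exact zero_pow (Nat.sub_ne_zero_of_lt hjt)
    rwa [sum_eq_single_of_mem j (by simp) hvanish, Nat.sub_self, pow_zero] at this
  have hfactor (j : Fin n) : Tendsto (fun b => geomWeights 1 b j / tailSum (geomWeights 1 b) j)
      atTop (𝓝 1) := by
    refine (inv_one (G := ℚ) ▸ (hsum j).inv₀ one_ne_zero).congr' ?_
    filter_upwards [eventually_gt_atTop 0] with b hb
    rw [div_tailSum_eq_inv]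
    refine congrArg _ (sum_congr rfl fun t ht => ?_)
    have hjt : (j : ℕ) ≤ t := (mem_filter.1 ht).2
    have hexp : n - 1 - (j : ℕ) = n - 1 - t + (t - j) := by have := t.isLt; omega
    simp only [geomWeights, Equiv.Perm.one_apply]
    rw [hexp, pow_add, div_mul_cancel_left₀ (pow_pos hb _).ne', inv_pow]
  simpa only [eq_prod_div_tailSum, prod_const_one] using
    tendsto_finsetProd _ fun j _ => hfactor j

theorem tendsto_geomWeights (π : Equiv.Perm (Fin n)) :
    Tendsto (fun b => Pfin (geomWeights π b)) atTop (𝓝 (if π = 1 then 1 else 0)) := by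
  split_ifs with hπ
  · exact hπ ▸ tendsto_geomWeights_one
  · exact tendsto_geomWeights_of_ne_one hπ

end Pfin

open Pfin in
theorem stmt9_general (n : ℕ) (α : Equiv.Perm (Fin n) → ℚ)
    (h : ∀ μ : Fin n → ℕ, (∀ i, 0 < μ i) →
      ∑ σ : Equiv.Perm (Fin n), α σ * Pfin (fun i => (μ (σ i) : ℚ)) = 0) :
    ∀ σ : Equiv.Perm (Fin n), α σ = 0 := by
  intro τ
  have hzero (B : ℕ) (hB : 0 < B) : ∑ σ, α σ * Pfin (geomWeights (τ⁻¹ * σ) B) = 0 := by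
    have := h (fun i => B ^ (n - 1 - (τ⁻¹ i : ℕ))) fun i => pow_pos hB _
    push_cast at this
    exact this
  have hlim : Tendsto (fun b => ∑ σ, α σ * Pfin (geomWeights (τ⁻¹ * σ) b)) atTop (𝓝 (α τ)) := by
    simpa [inv_mul_eq_one] using
      tendsto_finsetSum univ fun σ _ => (tendsto_geomWeights (τ⁻¹ * σ)).const_mul (α σ)
  refine tendsto_nhds_unique (hlim.comp tendsto_natCast_atTop_atTop)
    (tendsto_const_nhds.congr' ?_)
  filter_upwards [eventually_gt_atTop 0] with B hB using (hzero B hB).symm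

/-- If `∑_{σ ∈ S_n} α_σ P_n(λ_{σ(1)},...,λ_{σ(n)}) = 0` for all positive integers
`λ_1,...,λ_n`, then all `α_σ = 0`. -/
theorem stmt9 (n : ℕ) (hn : 1 ≤ n) (α : Equiv.Perm (Fin n) → ℚ)
    (h : ∀ μ : Fin n → ℕ, (∀ i, 0 < μ i) →
      ∑ σ : Equiv.Perm (Fin n), α σ * Pfin (fun i => (μ (σ i) : ℚ)) = 0) :
    ∀ σ : Equiv.Perm (Fin n), α σ = 0 :=
  stmt9_general n α h
end

section
/- The functions {Q_n(λ_{σ(1)},...,λ_{σ(n)}) : σ ∈ S_n}, viewed as rational functions in the variables λ_1,...,λ_n over ℚ, are linearly independent, where Q_n(μ_1,...,μ_n) = 1/∏_{j=2}^{n}(μ_j + ... + μ_n). -/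
open MvPolynomial

/-!
Multiplied by the factor `λ_1 + ⋯ + λ_n`, which does not depend on `σ`, the denominator of
`Q_n(λ_σ)` becomes `P(l) = ∏ₖ (λ_{l₁} + ⋯ + λ_{lₖ})` for the list `l = σ(n-1), …, σ(0)`.
So it suffices that the `1 / P(l)`, `l` ranging over lists without repetitions, are linearly
independent. Given a relation, fix a variable `i`. For `l = i :: m` we have
`P(l) = λ_i · P_{λ_i}(m)`, where `P_y` shifts every prefix sum by `y`; so after multiplying
the relation by `λ_i` and setting `λ_i = 0`, the terms of lists not starting with `i` vanish
and those of `i :: m` become `1 / P(m)`. This is a relation among shorter lists, and induction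
on the length kills all coefficients.
-/

/-- `prefixSumProd x y [a₁, …, aₖ] = ∏_{j=1}^{k} (y + x a₁ + ⋯ + x aⱼ)`. -/
def prefixSumProd {ι R : Type*} [CommRing R] (x : ι → R) : R → List ι → R
  | _, [] => 1
  | y, a :: l => (y + x a) * prefixSumProd x (y + x a) l

namespace prefixSumProd

variable {ι R S : Type*} [CommRing R] [CommRing S]

@[simp] theorem nil (x : ι → R) (y : R) : prefixSumProd x y [] = 1 := rfl

@[simp] theorem cons (x : ι → R) (y : R) (a : ι) (l : List ι) :
    prefixSumProd x y (a :: l) = (y + x a) * prefixSumProd x (y + x a) l := rfl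

theorem map (φ : R →+* S) (x : ι → R) (y : R) (l : List ι) :
    φ (prefixSumProd x y l) = prefixSumProd (φ ∘ x) (φ y) l := by
  induction l generalizing y <;> simp [*]

theorem congr {x x' : ι → R} (y : R) {l : List ι} (h : ∀ a ∈ l, x a = x' a) :
    prefixSumProd x y l = prefixSumProd x' y l := by
  induction l generalizing y with
  | nil => rfl
  | cons a l ih =>
    simp only [cons, h a List.mem_cons_self, ih _ fun b hb => h b (List.mem_cons_of_mem a hb)]

theorem pos [LinearOrder R] [IsStrictOrderedRing R] {x : ι → R} {y : R} {l : List ι}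
    (hx : ∀ a ∈ l, 0 ≤ x a) (hy : 0 < y) : 0 < prefixSumProd x y l := by
  induction l generalizing y with
  | nil => exact one_pos
  | cons a l ih =>
    have hya : 0 < y + x a := add_pos_of_pos_of_nonneg hy (hx a List.mem_cons_self)
    exact mul_pos hya (ih (fun b hb => hx b (List.mem_cons_of_mem a hb)) hya)

theorem pos_of_head_pos [LinearOrder R] [IsStrictOrderedRing R] {x : ι → R} {l : List ι}
    (hx : ∀ a ∈ l, 0 ≤ x a) (hhead : ∀ a ∈ l.head?, 0 < x a) : 0 < prefixSumProd x 0 l := by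
  cases l with
  | nil => exact one_pos
  | cons a l =>
    rw [cons, zero_add]
    have ha : 0 < x a := hhead a rfl
    exact mul_pos ha (pos (fun b hb => hx b (List.mem_cons_of_mem a hb)) ha)

theorem ne_zero_of_map_pos {F : Type*} [Field F] [LinearOrder F] [IsStrictOrderedRing F]
    (φ : R →+* F) {x : ι → R} {l : List ι} (hx : ∀ a ∈ l, 0 ≤ φ (x a))
    (hhead : ∀ a ∈ l.head?, 0 < φ (x a)) : prefixSumProd x 0 l ≠ 0 := by
  intro h
  have hpos := pos_of_head_pos (x := φ ∘ x) hx hhead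
  rw [← map_zero φ, ← map, h, map_zero] at hpos
  exact hpos.false

theorem ofFn_reverse {n : ℕ} (x : ι → R) (y : R) (f : Fin n → ι) :
    prefixSumProd x y (List.ofFn f).reverse
      = ∏ j : Fin n, (y + ∑ t ∈ Finset.univ.filter (fun t => j ≤ t), x (f t)) := by
  induction n generalizing y with
  | zero => simp
  | succ n ih =>
    rw [List.ofFn_succ', List.concat_eq_append, List.reverse_append, List.reverse_singleton,
      List.singleton_append, cons, ih, Fin.prod_univ_castSucc, mul_comm]
    simp [Finset.sum_filter, Fin.sum_univ_castSucc, Fin.le_last, add_assoc, add_comm]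

end prefixSumProd

theorem Finset.sum_div_mul_prod {α K : Type*} [DecidableEq α] [Field K] (s : Finset α)
    (c f : α → K) (hf : ∀ a ∈ s, f a ≠ 0) :
    (∑ a ∈ s, c a / f a) * ∏ a ∈ s, f a = ∑ a ∈ s, c a * ∏ b ∈ s.erase a, f b := by
  rw [Finset.sum_mul]
  refine Finset.sum_congr rfl fun a ha => ?_
  rw [← Finset.mul_prod_erase s f ha, div_mul_eq_mul_div, mul_comm (f a), ← mul_assoc,
    mul_div_assoc, div_self (hf a ha), mul_one]

/-- Clearing denominators gives an identity in `R` in which the `t`-terms carry the factor `x`;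
`ψ` kills them, and dividing back in `L` leaves the `s`-terms. -/
theorem sum_div_map_eq_zero_of_sum_div_eq_zero {α β R K L : Type*} [DecidableEq α]
    [DecidableEq β] [CommRing R] [Field K] [Algebra R K] [FaithfulSMul R K] [Field L]
    (ψ : R →+* L) {x : R} (hx₀ : x ≠ 0) (hx : ψ x = 0) {s : Finset α} {t : Finset β}
    {c f : α → R} {d g : β → R} (hf : ∀ a ∈ s, ψ (f a) ≠ 0) (hg : ∀ b ∈ t, ψ (g b) ≠ 0)
    (h : ∑ a ∈ s, algebraMap R K (c a) / algebraMap R K (x * f a)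
      + ∑ b ∈ t, algebraMap R K (d b) / algebraMap R K (g b) = 0) :
    ∑ a ∈ s, ψ (c a) / ψ (f a) = 0 := by
  set u := algebraMap R K
  have hu : Function.Injective u := FaithfulSMul.algebraMap_injective R K
  have hu₀ {r : R} (hr : ψ r ≠ 0) : u r ≠ 0 := by
    rw [map_ne_zero_iff u hu]
    rintro rfl
    exact hr (map_zero ψ)
  have hux : u x ≠ 0 := (map_ne_zero_iff u hu).mpr hx₀
  have hR : (∑ a ∈ s, c a * ∏ a' ∈ s.erase a, f a') * ∏ b ∈ t, g b
      + x * ((∑ b ∈ t, d b * ∏ b' ∈ t.erase b, g b') * ∏ a ∈ s, f a) = 0 := by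
    apply hu
    simp only [map_add, map_mul, map_sum, map_prod, map_zero]
    rw [← Finset.sum_div_mul_prod _ _ _ fun a ha => hu₀ (hf a ha),
      ← Finset.sum_div_mul_prod _ _ _ fun b hb => hu₀ (hg b hb)]
    have hs : ∑ a ∈ s, u (c a) / u (x * f a) = (∑ a ∈ s, u (c a) / u (f a)) / u x := by
      rw [Finset.sum_div]
      exact Finset.sum_congr rfl fun a _ => by rw [map_mul, mul_comm, div_div]
    rw [hs, div_add' _ _ _ hux, div_eq_zero_iff, or_iff_left hux] at h
    linear_combination (∏ a ∈ s, u (f a)) * (∏ b ∈ t, u (g b)) * h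
  have hψ := congrArg ψ hR
  simp only [map_add, map_mul, map_sum, map_prod, hx, zero_mul, add_zero, map_zero] at hψ
  rw [← Finset.sum_div_mul_prod _ _ _ hf, mul_eq_zero, mul_eq_zero,
    or_iff_left (Finset.prod_ne_zero_iff.mpr hg),
    or_iff_left (Finset.prod_ne_zero_iff.mpr hf)] at hψ
  exact hψ

theorem LinearIndependent.of_eq_mul_left {ι R K : Type*} [Semiring R] [Semiring K] [Module R K]
    [SMulCommClass R K K] {v w : ι → K} (hv : LinearIndependent R v) {a : K}
    (ha : IsLeftRegular a) (hw : ∀ i, w i = a * v i) : LinearIndependent R w := by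
  rw [show w = AddMonoidHom.mulLeft a ∘ v from funext hw]
  exact hv.map_of_injective_injectiveₛ id _ Function.injective_id ha
    fun r m => mul_smul_comm r a m

namespace MvPolynomial

section PrefixSums

variable {ι : Type*}

local notation "𝕂" => FractionRing (MvPolynomial ι ℚ)

local notation "ofPoly" => algebraMap (MvPolynomial ι ℚ) (FractionRing (MvPolynomial ι ℚ))

theorem prefixSumProd_X_ne_zero (l : List ι) :
    prefixSumProd (X : ι → MvPolynomial ι ℚ) 0 l ≠ 0 :=
  prefixSumProd.ne_zero_of_map_pos (eval fun _ => 1) (by simp) (by simp)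

theorem smul_eq_algebraMap_C_mul (q : ℚ) (y : 𝕂) : q • y = ofPoly (C q) * y := by
  rw [algebra_compatible_smul (MvPolynomial ι ℚ) q y, Algebra.smul_def, algebraMap_eq]

section SetVarZero

variable [DecidableEq ι]

noncomputable def setVarZero (R : Type*) [CommSemiring R] (i : ι) :
    MvPolynomial ι R →ₐ[R] MvPolynomial ι R :=
  aeval (Function.update X i 0)

@[simp] theorem setVarZero_X (R : Type*) [CommSemiring R] (i a : ι) :
    setVarZero R i (X a) = Function.update X i 0 a :=
  aeval_X _ a

theorem setVarZero_prefixSumProd_ne_zero {i : ι} {l : List ι} (hl : l.head? ≠ some i) :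
    setVarZero ℚ i (prefixSumProd X 0 l) ≠ 0 := by
  rw [← AlgHom.coe_toRingHom, prefixSumProd.map, map_zero]
  refine prefixSumProd.ne_zero_of_map_pos (eval fun a => if a = i then 0 else 1) ?_ ?_
  · intro a _
    by_cases ha : a = i <;> simp [ha]
  · intro a ha
    have : a ≠ i := by
      rintro rfl
      exact hl ha
    simp [this]

theorem setVarZero_prefixSumProd {i : ι} {l : List ι} (hi : i ∉ l) :
    setVarZero ℚ i (prefixSumProd X (X i) l) = prefixSumProd X 0 l := by
  rw [← AlgHom.coe_toRingHom, prefixSumProd.map]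
  simp only [AlgHom.coe_toRingHom, setVarZero_X, Function.update_self]
  refine prefixSumProd.congr _ fun a ha => ?_
  simp [show a ≠ i by rintro rfl; exact hi ha]

end SetVarZero

theorem sum_div_prefixSumProd_preimage_cons_eq_zero (i : ι) {s : Finset (List ι)}
    (hs : ∀ l ∈ s, l.Nodup) {c : List ι → ℚ}
    (h : ∑ l ∈ s, ofPoly (C (c l)) / ofPoly (prefixSumProd X 0 l) = 0) :
    ∑ m ∈ s.preimage (List.cons i) List.cons_injective.injOn,
      ofPoly (C (c (i :: m))) / ofPoly (prefixSumProd X 0 m) = 0 := by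
  classical
  set s' := s.preimage (List.cons i) List.cons_injective.injOn
  set ψ := (ofPoly).comp (setVarZero ℚ i).toRingHom
  have hs' : ∀ m ∈ s', i ∉ m := fun m hm =>
    (List.nodup_cons.mp (hs _ (Finset.mem_preimage.mp hm))).1
  have hψ : ∀ m ∈ s', ψ (prefixSumProd X (X i) m) = ofPoly (prefixSumProd X 0 m) :=
    fun m hm => congrArg ofPoly (setVarZero_prefixSumProd (hs' m hm))
  rw [← Finset.sum_filter_add_sum_filter_not s (· ∈ Set.range (List.cons i)),
    ← Finset.sum_preimage' _ _ List.cons_injective.injOn] at h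
  simp only [prefixSumProd.cons, zero_add] at h
  have hspec := sum_div_map_eq_zero_of_sum_div_eq_zero (K := 𝕂) ψ (X_ne_zero i) (by simp [ψ])
    (s := s') (c := fun m => C (c (i :: m))) (f := fun m => prefixSumProd X (X i) m)
    (d := fun l => C (c l)) (g := fun l => prefixSumProd X 0 l)
    (fun m hm => by
      rw [hψ m hm, map_ne_zero_iff _ (IsFractionRing.injective _ _)]
      exact prefixSumProd_X_ne_zero m)
    (fun l hl => by
      rw [RingHom.comp_apply, map_ne_zero_iff _ (IsFractionRing.injective _ _)]
      refine setVarZero_prefixSumProd_ne_zero fun hhead => (Finset.mem_filter.mp hl).2 ?_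
      obtain ⟨m, rfl⟩ := List.head?_eq_some_iff.mp hhead
      exact ⟨m, rfl⟩)
    h
  rw [← hspec]
  refine Finset.sum_congr rfl fun m hm => ?_
  rw [hψ m hm]
  simp [ψ, setVarZero]

theorem eq_zero_of_sum_div_prefixSumProd_eq_zero (N : ℕ) {s : Finset (List ι)}
    (hs : ∀ l ∈ s, l.Nodup ∧ l.length < N) {c : List ι → ℚ}
    (h : ∑ l ∈ s, ofPoly (C (c l)) / ofPoly (prefixSumProd X 0 l) = 0) :
    ∀ l ∈ s, c l = 0 := by
  induction N generalizing s c with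
  | zero => exact fun l hl => absurd (hs l hl).2 (Nat.not_lt_zero _)
  | succ N ih =>
    have hcons : ∀ i m, i :: m ∈ s → c (i :: m) = 0 := fun i m hm =>
      ih (c := fun m => c (i :: m))
        (fun m' hm' => by
          obtain ⟨hnd, hlen⟩ := hs _ (Finset.mem_preimage.mp hm')
          exact ⟨hnd.of_cons, by simpa using hlen⟩)
        (sum_div_prefixSumProd_preimage_cons_eq_zero i (fun l hl => (hs l hl).1) h)
        m (Finset.mem_preimage.mpr hm)
    rintro (_ | ⟨i, m⟩) hl
    · rw [Finset.sum_eq_single_of_mem [] hl ?_] at h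
      · simpa using h
      · rintro (_ | ⟨i, m⟩) hm hne
        · exact absurd rfl hne
        · simp [hcons i m hm]
    · exact hcons i m hl

theorem linearIndependent_inv_prefixSumProd :
    LinearIndependent ℚ fun l : {l : List ι // l.Nodup} => (ofPoly (prefixSumProd X 0 l.1))⁻¹ := by
  rw [linearIndependent_iff']
  intro s g hg l hl
  have key := eq_zero_of_sum_div_prefixSumProd_eq_zero (s.sup (fun l => l.1.length) + 1)
    (s := s.map (Function.Embedding.subtype _)) (c := Function.extend Subtype.val g 0) ?_ ?_
    l.1 (Finset.mem_map_of_mem _ hl)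
  · rwa [Subtype.val_injective.extend_apply] at key
  · simp only [Finset.mem_map, Function.Embedding.coe_subtype]
    rintro _ ⟨l, hl, rfl⟩
    exact ⟨l.2, Nat.lt_succ_of_le (Finset.le_sup (f := fun l => l.1.length) hl)⟩
  · rw [Finset.sum_map, ← hg]
    refine Finset.sum_congr rfl fun l _ => ?_
    rw [Function.Embedding.coe_subtype, Subtype.val_injective.extend_apply, div_eq_mul_inv]
    -- `exact` rather than `rw`: the `ℚ`-module structure found here is only defeq, not
    -- syntactically equal, to the one in `smul_eq_algebraMap_C_mul`.
    exact (smul_eq_algebraMap_C_mul (g l) _).symm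

end PrefixSums

end MvPolynomial

/-- The rational functions `Q_n(λ_{σ(1)},...,λ_{σ(n)})`, `σ ∈ S_n`, i.e. the inverses
of the polynomials `∏_{j=2}^{n} (λ_{σ(j)} + ... + λ_{σ(n)})` in the fraction field of
`ℚ[λ_1,...,λ_n]`, are linearly independent over `ℚ`. -/
theorem stmt10 (n : ℕ) :
    LinearIndependent ℚ (fun σ : Equiv.Perm (Fin n) =>
      ((algebraMap (MvPolynomial (Fin n) ℚ) (FractionRing (MvPolynomial (Fin n) ℚ)))
        (∏ j ∈ Finset.univ.filter (fun j : Fin n => (j : ℕ) ≠ 0),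
          ∑ t ∈ Finset.univ.filter (fun t : Fin n => j ≤ t), X (σ t)))⁻¹) := by
  cases n with
  | zero => exact linearIndependent_unique_iff.mpr (by simp)
  | succ n =>
    have hfactor (σ : Equiv.Perm (Fin (n + 1))) : prefixSumProd X 0 (List.ofFn σ).reverse
        = (∑ t, X t) * ∏ j ∈ Finset.univ.filter (fun j : Fin (n + 1) => (j : ℕ) ≠ 0),
          ∑ t ∈ Finset.univ.filter (fun t => j ≤ t), (X (σ t) : MvPolynomial (Fin (n + 1)) ℚ) := by
      rw [prefixSumProd.ofFn_reverse]
      simp [Finset.prod_filter, Fin.prod_univ_succ,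
        Equiv.sum_comp σ fun t => (X t : MvPolynomial (Fin (n + 1)) ℚ)]
    have hS : algebraMap (MvPolynomial (Fin (n + 1)) ℚ)
        (FractionRing (MvPolynomial (Fin (n + 1)) ℚ)) (∑ t, X t) ≠ 0 := by
      rw [map_ne_zero_iff _ (IsFractionRing.injective _ _)]
      exact left_ne_zero_of_mul (hfactor 1 ▸ prefixSumProd_X_ne_zero _)
    have hL : Function.Injective fun σ : Equiv.Perm (Fin (n + 1)) =>
        (⟨(List.ofFn σ).reverse, List.nodup_reverse.mpr (List.nodup_ofFn.mpr σ.injective)⟩ :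
          {l : List (Fin (n + 1)) // l.Nodup}) := fun σ τ h =>
      DFunLike.coe_injective (List.ofFn_injective (List.reverse_injective (congrArg Subtype.val h)))
    refine (linearIndependent_inv_prefixSumProd.comp _ hL).of_eq_mul_left
      (mul_right_injective₀ hS) fun σ => ?_
    simp only [Function.comp_apply, hfactor σ, map_mul]
    rw [mul_inv, mul_inv_cancel_left₀ hS]
end
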